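/- Let c : ℝ^{2n} × ℝ → ℝ^{2n} be C¹, and let p(t) solve the feedback law ṗ = (I − ∂c/∂p)^{-1}(−k(p − c) + ∂c/∂t) with k > 0, assuming the inverse exists along the trajectory. Then the error e(t) = p(t) − c(p(t),t) satisfies ė = −k e, hence ‖e(t)‖ = e^{−k(t−t_0)}‖e(t_0)‖, so the configuration converges exponentially to a centroidal configuration. -/

import Mathlib

open ContinuousLinearMap

/-!
Differentiating `e(t) = p(t) − c(p(t), t)` by the chain rule gives
`ė = (I − ∂c/∂p) ṗ − ∂c/∂t`; since `ṗ = (I − ∂c/∂p)⁻¹ (−k e + ∂c/∂t)`, this collapses to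
`ė = −k e`. Then `exp(k t) • e(t)` has zero derivative, hence is constant.
-/

section

variable {E : Type*} [NormedAddCommGroup E] [NormedSpace ℝ E]

theorem eq_exp_smul_of_hasDerivAt_neg_smul {f : ℝ → E} {k t₀ : ℝ}
    (hf : ∀ t ≥ t₀, HasDerivAt f (-(k • f t)) t) {t : ℝ} (ht : t₀ ≤ t) :
    f t = Real.exp (-k * (t - t₀)) • f t₀ := by
  set g : ℝ → E := fun s => Real.exp (k * s) • f s
  have hg : ∀ s ≥ t₀, HasDerivAt g 0 s := by
    intro s hs
    have hexp : HasDerivAt (fun x => Real.exp (k * x)) (Real.exp (k * s) * k) s := by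
      simpa using ((hasDerivAt_id s).const_mul k).exp
    refine (hexp.smul (hf s hs)).congr_deriv ?_
    rw [smul_neg, smul_smul]
    module
  have hconst : g t = g t₀ :=
    constant_of_has_deriv_right_zero
      (fun s hs => (hg s hs.1).continuousAt.continuousWithinAt)
      (fun s hs => (hg s hs.1).hasDerivWithinAt) t (Set.right_mem_Icc.2 ht)
  calc f t = (Real.exp (k * t))⁻¹ • g t := by
        simp only [g, smul_smul, inv_mul_cancel₀ (Real.exp_ne_zero _), one_smul]
    _ = Real.exp (-k * (t - t₀)) • f t₀ := by
        rw [hconst, smul_smul, ← Real.exp_neg, ← Real.exp_add]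
        ring_nf

theorem norm_eq_exp_mul_norm_of_hasDerivAt_neg_smul {f : ℝ → E} {k t₀ : ℝ}
    (hf : ∀ t ≥ t₀, HasDerivAt f (-(k • f t)) t) {t : ℝ} (ht : t₀ ≤ t) :
    ‖f t‖ = Real.exp (-k * (t - t₀)) * ‖f t₀‖ := by
  rw [eq_exp_smul_of_hasDerivAt_neg_smul hf ht, norm_smul, Real.norm_of_nonneg (Real.exp_pos _).le]

theorem hasDerivAt_sub_comp_prodMk {c : E → ℝ → E} {D : E × ℝ →L[ℝ] E} {p : ℝ → E} {v : E}
    {t : ℝ} (hc : HasFDerivAt (fun x : E × ℝ => c x.1 x.2) D (p t, t))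
    (hp : HasDerivAt p v t) :
    HasDerivAt (fun s => p s - c (p s) s)
      ((ContinuousLinearMap.id ℝ E - D.comp (inl ℝ E ℝ)) v - D (0, 1)) t := by
  have hc' : HasDerivAt (fun s => c (p s) s) (D (v, 1)) t :=
    hc.comp_hasDerivAt (f := fun s => (p s, s)) t (hp.prodMk (hasDerivAt_id t))
  refine (hp.sub hc').congr_deriv ?_
  have hsplit : D (v, 1) = D (v, 0) + D (0, 1) := by rw [← map_add, Prod.mk_add_mk, add_zero, zero_add]
  rw [hsplit, sub_apply, id_apply, comp_apply, inl_apply]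
  abel

theorem hasDerivAt_sub_comp_prodMk_of_rightInverse {c : E → ℝ → E} {D : E × ℝ →L[ℝ] E}
    {B : E →L[ℝ] E} {p : ℝ → E} {w : E} {t : ℝ}
    (hc : HasFDerivAt (fun x : E × ℝ => c x.1 x.2) D (p t, t))
    (hB : (ContinuousLinearMap.id ℝ E - D.comp (inl ℝ E ℝ)).comp B = ContinuousLinearMap.id ℝ E)
    (hp : HasDerivAt p (B (w + D (0, 1))) t) :
    HasDerivAt (fun s => p s - c (p s) s) w t := by
  convert hasDerivAt_sub_comp_prodMk hc hp using 1
  rw [← comp_apply, hB, id_apply, add_sub_cancel_right]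

end

theorem tvdc_exponential_convergence_general
    (n : ℕ) (k : ℝ)
    (c : EuclideanSpace ℝ (Fin (2 * n)) → ℝ → EuclideanSpace ℝ (Fin (2 * n)))
    (p : ℝ → EuclideanSpace ℝ (Fin (2 * n))) (t₀ : ℝ)
    (Dc : ℝ → (EuclideanSpace ℝ (Fin (2 * n)) × ℝ →L[ℝ]
      EuclideanSpace ℝ (Fin (2 * n))))
    (hDc : ∀ t, HasFDerivAt
      (fun x : EuclideanSpace ℝ (Fin (2 * n)) × ℝ => c x.1 x.2) (Dc t) (p t, t))
    -- `B t` is the inverse of `I − ∂c/∂p` along the trajectory, assumed to exist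
    (B : ℝ → (EuclideanSpace ℝ (Fin (2 * n)) →L[ℝ] EuclideanSpace ℝ (Fin (2 * n))))
    (hB₁ : ∀ t ≥ t₀,
      (ContinuousLinearMap.id ℝ _ -
        (Dc t).comp (ContinuousLinearMap.inl ℝ _ ℝ)).comp (B t) =
        ContinuousLinearMap.id ℝ _)
    (hp : ∀ t ≥ t₀, HasDerivAt p
      (B t (-(k • (p t - c (p t) t)) + Dc t (0, 1))) t) :
    (∀ t ≥ t₀, HasDerivAt (fun s => p s - c (p s) s)
        (-(k • (p t - c (p t) t))) t) ∧
    ∀ t ≥ t₀, ‖p t - c (p t) t‖ =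
      Real.exp (-k * (t - t₀)) * ‖p t₀ - c (p t₀) t₀‖ := by
  have herr : ∀ t ≥ t₀, HasDerivAt (fun s => p s - c (p s) s) (-(k • (p t - c (p t) t))) t :=
    fun t ht => hasDerivAt_sub_comp_prodMk_of_rightInverse (hDc t) (hB₁ t ht) (hp t ht)
  exact ⟨herr, fun t ht => norm_eq_exp_mul_norm_of_hasDerivAt_neg_smul (f := fun s => p s - c (p s) s) herr ht⟩

/-- TVD-C: under `ṗ = (I − ∂c/∂p)⁻¹(−k(p−c) + ∂c/∂t)`, the error
`e(t) = p(t) − c(p(t),t)` decays exponentially: `‖e(t)‖ = e^{−k(t−t₀)}‖e(t₀)‖`. -/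
theorem tvdc_exponential_convergence
    (n : ℕ) (k : ℝ) (hk : 0 < k)
    (c : EuclideanSpace ℝ (Fin (2 * n)) → ℝ → EuclideanSpace ℝ (Fin (2 * n)))
    (hc : ContDiff ℝ 1 (fun x : EuclideanSpace ℝ (Fin (2 * n)) × ℝ => c x.1 x.2))
    (p : ℝ → EuclideanSpace ℝ (Fin (2 * n))) (t₀ : ℝ)
    (Dc : ℝ → (EuclideanSpace ℝ (Fin (2 * n)) × ℝ →L[ℝ]
      EuclideanSpace ℝ (Fin (2 * n))))
    (hDc : ∀ t, HasFDerivAt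
      (fun x : EuclideanSpace ℝ (Fin (2 * n)) × ℝ => c x.1 x.2) (Dc t) (p t, t))
    -- `B t` is the inverse of `I − ∂c/∂p` along the trajectory, assumed to exist
    (B : ℝ → (EuclideanSpace ℝ (Fin (2 * n)) →L[ℝ] EuclideanSpace ℝ (Fin (2 * n))))
    (hB₁ : ∀ t ≥ t₀,
      (ContinuousLinearMap.id ℝ _ -
        (Dc t).comp (ContinuousLinearMap.inl ℝ _ ℝ)).comp (B t) =
        ContinuousLinearMap.id ℝ _)
    (hB₂ : ∀ t ≥ t₀,
      (B t).comp (ContinuousLinearMap.id ℝ _ -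
        (Dc t).comp (ContinuousLinearMap.inl ℝ _ ℝ)) =
        ContinuousLinearMap.id ℝ _)
    (hp : ∀ t ≥ t₀, HasDerivAt p
      (B t (-(k • (p t - c (p t) t)) + Dc t (0, 1))) t) :
    (∀ t ≥ t₀, HasDerivAt (fun s => p s - c (p s) s)
        (-(k • (p t - c (p t) t))) t) ∧
    ∀ t ≥ t₀, ‖p t - c (p t) t‖ =
      Real.exp (-k * (t - t₀)) * ‖p t₀ - c (p t₀) t₀‖ :=
  tvdc_exponential_convergence_general n k c p t₀ Dc hDc B hB₁ hp
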